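/- Let f : ℝ → ℝ be Lipschitz with constant L. Define f on symmetric matrices by functional calculus: f(A) = H f(Λ) Hᵀ where A = HΛHᵀ is a spectral decomposition. Then for any d×d real symmetric matrices A₁, A₂, ‖f(A₁) − f(A₂)‖_F ≤ L·‖A₁ − A₂‖_F. -/
import Mathlib


open Matrix Finset

lemma frob_conj {d : ℕ} (U V M : Matrix (Fin d) (Fin d) ℝ)
    (hU : U ∈ Matrix.unitaryGroup (Fin d) ℝ) (hV : V ∈ Matrix.unitaryGroup (Fin d) ℝ) :
    ∑ i, ∑ j, (star U * M * V) i j ^ 2 = ∑ i, ∑ j, M i j ^ 2 := by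
  have key : ∀ N : Matrix (Fin d) (Fin d) ℝ,
      ∑ i, ∑ j, N i j ^ 2 = Matrix.trace (Nᵀ * N) := by
    intro N
    simp only [Matrix.trace, Matrix.diag, Matrix.mul_apply, Matrix.transpose_apply, sq]
    exact Finset.sum_comm
  have hsU : star U = Uᵀ := by
    ext i j; simp [Matrix.star_eq_conjTranspose, Matrix.conjTranspose_apply]
  have hsV : star V = Vᵀ := by
    ext i j; simp [Matrix.star_eq_conjTranspose, Matrix.conjTranspose_apply]
  have hUU : U * star U = 1 := (Unitary.mem_iff.mp hU).2
  have hVV : V * star V = 1 := (Unitary.mem_iff.mp hV).2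
  rw [key, key]
  have h1 : (star U * M * V)ᵀ * (star U * M * V) = Vᵀ * (Mᵀ * M) * V := by
    rw [Matrix.transpose_mul, Matrix.transpose_mul, hsU, Matrix.transpose_transpose]
    calc Vᵀ * (Mᵀ * U) * (Uᵀ * M * V)
        = Vᵀ * (Mᵀ * (U * (star U)) * M) * V := by rw [hsU]; noncomm_ring
      _ = Vᵀ * (Mᵀ * M) * V := by rw [hUU, Matrix.mul_one]
  rw [h1, Matrix.trace_mul_cycle, ← hsV, ← Matrix.mul_assoc, hVV, Matrix.one_mul]


/-- Functional calculus: apply `f : ℝ → ℝ` to a real symmetric (Hermitian) matrix via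
its spectral decomposition `A = H Λ Hᵀ`. -/
noncomputable def matFun {d : ℕ} (f : ℝ → ℝ) (A : Matrix (Fin d) (Fin d) ℝ)
    (hA : A.IsHermitian) : Matrix (Fin d) (Fin d) ℝ :=
  (hA.eigenvectorUnitary : Matrix (Fin d) (Fin d) ℝ) *
    Matrix.diagonal (fun i => f (hA.eigenvalues i)) *
      star (hA.eigenvectorUnitary : Matrix (Fin d) (Fin d) ℝ)

theorem lipschitz_functional_calculus_frobenius {d : ℕ} (f : ℝ → ℝ) (L : ℝ)
    (hf : ∀ a b : ℝ, |f a - f b| ≤ L * |a - b|)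
    (A₁ A₂ : Matrix (Fin d) (Fin d) ℝ) (h₁ : A₁.IsHermitian) (h₂ : A₂.IsHermitian) :
    Real.sqrt (∑ i, ∑ j, ((matFun f A₁ h₁ - matFun f A₂ h₂) i j) ^ 2) ≤
      L * Real.sqrt (∑ i, ∑ j, ((A₁ - A₂) i j) ^ 2) := by
  have hL : 0 ≤ L := by
    have h := hf 1 0
    have h0 : (0:ℝ) ≤ |f 1 - f 0| := abs_nonneg _
    simp at h
    linarith
  set U := (h₁.eigenvectorUnitary : Matrix (Fin d) (Fin d) ℝ) with hUdef
  set V := (h₂.eigenvectorUnitary : Matrix (Fin d) (Fin d) ℝ) with hVdef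
  have hU : U ∈ Matrix.unitaryGroup (Fin d) ℝ := h₁.eigenvectorUnitary.2
  have hV : V ∈ Matrix.unitaryGroup (Fin d) ℝ := h₂.eigenvectorUnitary.2
  have hU1 : star U * U = 1 := (Unitary.mem_iff.mp hU).1
  have hV1 : star V * V = 1 := (Unitary.mem_iff.mp hV).1
  set W := star U * V with hWdef
  set lam := h₁.eigenvalues with hlam
  set mu := h₂.eigenvalues with hmu
  -- conjugated difference of matFun
  have eX : star U * (matFun f A₁ h₁ - matFun f A₂ h₂) * V
      = Matrix.diagonal (fun i => f (lam i)) * W - W * Matrix.diagonal (fun i => f (mu i)) := by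
    have e1 : star U * matFun f A₁ h₁ * V
        = Matrix.diagonal (fun i => f (lam i)) * W := by
      show star U * (U * Matrix.diagonal (fun i => f (lam i)) * star U) * V = _
      calc star U * (U * Matrix.diagonal (fun i => f (lam i)) * star U) * V
          = (star U * U) * (Matrix.diagonal (fun i => f (lam i)) * (star U * V)) := by
            noncomm_ring
        _ = _ := by rw [hU1, Matrix.one_mul, hWdef]
    have e2 : star U * matFun f A₂ h₂ * V
        = W * Matrix.diagonal (fun i => f (mu i)) := by
      show star U * (V * Matrix.diagonal (fun i => f (mu i)) * star V) * V = _
      calc star U * (V * Matrix.diagonal (fun i => f (mu i)) * star V) * V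
          = (star U * V) * (Matrix.diagonal (fun i => f (mu i)) * (star V * V)) := by
            noncomm_ring
        _ = _ := by rw [hV1, Matrix.mul_one, hWdef]
    rw [Matrix.mul_sub, Matrix.sub_mul, e1, e2]
  -- conjugated difference of A's
  have eY : star U * (A₁ - A₂) * V
      = Matrix.diagonal lam * W - W * Matrix.diagonal mu := by
    have s1 : A₁ = U * Matrix.diagonal lam * star U := by
      have := h₁.spectral_theorem
      simpa using this
    have s2 : A₂ = V * Matrix.diagonal mu * star V := by
      have := h₂.spectral_theorem
      simpa using this
    have e1 : star U * A₁ * V = Matrix.diagonal lam * W := by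
      rw [s1]
      calc star U * (U * Matrix.diagonal lam * star U) * V
          = (star U * U) * (Matrix.diagonal lam * (star U * V)) := by noncomm_ring
        _ = _ := by rw [hU1, Matrix.one_mul, hWdef]
    have e2 : star U * A₂ * V = W * Matrix.diagonal mu := by
      rw [s2]
      calc star U * (V * Matrix.diagonal mu * star V) * V
          = (star U * V) * (Matrix.diagonal mu * (star V * V)) := by noncomm_ring
        _ = _ := by rw [hV1, Matrix.mul_one, hWdef]
    rw [Matrix.mul_sub, Matrix.sub_mul, e1, e2]
  -- sums
  have SX : ∑ i, ∑ j, ((matFun f A₁ h₁ - matFun f A₂ h₂) i j) ^ 2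
      = ∑ i, ∑ j, (W i j * (f (lam i) - f (mu j))) ^ 2 := by
    rw [← frob_conj U V _ hU hV, eX]
    congr 1; ext i; congr 1; ext j
    simp [Matrix.sub_apply, Matrix.diagonal_mul, Matrix.mul_diagonal]
    ring_nf
  have SY : ∑ i, ∑ j, ((A₁ - A₂) i j) ^ 2
      = ∑ i, ∑ j, (W i j * (lam i - mu j)) ^ 2 := by
    rw [← frob_conj U V _ hU hV, eY]
    congr 1; ext i; congr 1; ext j
    simp [Matrix.sub_apply, Matrix.diagonal_mul, Matrix.mul_diagonal]
    ring_nf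
  have hterm : ∀ i j, (W i j * (f (lam i) - f (mu j))) ^ 2
      ≤ L ^ 2 * (W i j * (lam i - mu j)) ^ 2 := by
    intro i j
    have h := hf (lam i) (mu j)
    have h2 : (f (lam i) - f (mu j)) ^ 2 ≤ L ^ 2 * (lam i - mu j) ^ 2 := by
      have := abs_nonneg (f (lam i) - f (mu j))
      nlinarith [sq_abs (f (lam i) - f (mu j)), sq_abs (lam i - mu j), abs_nonneg (lam i - mu j)]
    nlinarith [sq_nonneg (W i j)]
  have hsum : ∑ i, ∑ j, ((matFun f A₁ h₁ - matFun f A₂ h₂) i j) ^ 2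
      ≤ L ^ 2 * ∑ i, ∑ j, ((A₁ - A₂) i j) ^ 2 := by
    rw [SX, SY, Finset.mul_sum]
    refine Finset.sum_le_sum fun i _ => ?_
    rw [Finset.mul_sum]
    exact Finset.sum_le_sum fun j _ => hterm i j
  calc Real.sqrt (∑ i, ∑ j, ((matFun f A₁ h₁ - matFun f A₂ h₂) i j) ^ 2)
      ≤ Real.sqrt (L ^ 2 * ∑ i, ∑ j, ((A₁ - A₂) i j) ^ 2) := Real.sqrt_le_sqrt hsum
    _ = L * Real.sqrt (∑ i, ∑ j, ((A₁ - A₂) i j) ^ 2) := by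
        rw [Real.sqrt_mul (sq_nonneg L), Real.sqrt_sq hL]
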